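/- arXiv:1909.08892 — 4 statements merged into one kernel-verified Lean document; each statement's English description precedes it below -/
import Mathlib

section
/- For the biofilm model with m = 1/2, the matrix h''(u)A(u) is positive definite on the open Gibbs simplex: z^⊤ h''(u)A(u) z ≥ Σ_{i=1}^n z_i²/u_i^{2m} for all u ∈ D and z ∈ ℝ^n, with constant c_h = 1. -/
open Real Finset Matrix

/-!
Writing `s = 1 - ∑ uₖ`, the Hessian is `h''(u) = diag(1/u) + s⁻¹ 𝟙𝟙ᵀ` and the mobility is
`A(u) = I - u 𝟙ᵀ`. Every column of `A(u)` sums to `s`, so the rank-one parts cancel and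
`h''(u) A(u) = diag(1/u)` exactly. For `m = 1/2` the weight `u_i^{2m}` is `u_i`, so the
quadratic form is `∑ z_i² / u_i`, with equality in the claimed bound.
-/

section

variable {ι K : Type*} [Fintype ι] [DecidableEq ι] [Field K]

/-- The mobility matrix `A(u)` of the biofilm model. -/
def simplexMobility (u : ι → K) : Matrix ι ι K :=
  fun i j => if i = j then 1 - u i else -u i

/-- The Hessian `h''(u)` of the Gibbs entropy, with `u_{n+1} = 1 - ∑ uₖ`. -/
def gibbsEntropyHessian (u : ι → K) : Matrix ι ι K :=
  fun i j => (if i = j then 1 / u i else 0) + 1 / (1 - ∑ k, u k)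

theorem sum_simplexMobility_apply (u : ι → K) (j : ι) :
    ∑ k, simplexMobility u k j = 1 - ∑ k, u k := by
  have hcol : ∀ k, simplexMobility u k j = (if k = j then 1 else 0) - u k := by
    intro k
    by_cases h : k = j <;> simp [simplexMobility, h]
  simp only [hcol, sum_sub_distrib, sum_ite_eq', mem_univ, if_true]

theorem gibbsEntropyHessian_mul_simplexMobility {u : ι → K} (hu : ∀ i, u i ≠ 0)
    (hs : 1 - ∑ k, u k ≠ 0) :
    gibbsEntropyHessian u * simplexMobility u = diagonal fun i => 1 / u i := by
  ext i j
  have hsplit : ∀ k, gibbsEntropyHessian u i k * simplexMobility u k j =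
      (if i = k then 1 / u i * simplexMobility u i j else 0) +
        1 / (1 - ∑ l, u l) * simplexMobility u k j := by
    intro k
    by_cases h : i = k
    · subst h; simp [gibbsEntropyHessian, add_mul]
    · simp [gibbsEntropyHessian, h]
  rw [mul_apply, sum_congr rfl fun k _ => hsplit k, sum_add_distrib, sum_ite_eq, ← mul_sum,
    sum_simplexMobility_apply, if_pos (mem_univ i), one_div_mul_cancel hs]
  by_cases h : i = j
  · subst h
    simp only [simplexMobility, diagonal_apply_eq, if_true]
    field_simp [hu i]
    ring
  · simp [simplexMobility, h, hu i]

end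

theorem biofilm_quadratic_form_positive_general (n : ℕ) (u : Fin n → ℝ)
    (hu : (∀ i, 0 < u i ∧ u i < 1) ∧ ∑ i, u i < 1) (z : Fin n → ℝ) :
    let A : Matrix (Fin n) (Fin n) ℝ := fun i j => if i = j then 1 - u i else -u i
    let H : Matrix (Fin n) (Fin n) ℝ :=
      fun i j => (if i = j then 1 / u i else 0) + 1 / (1 - ∑ k, u k)
    let m : ℝ := 1 / 2
    z ⬝ᵥ (H * A).mulVec z ≥ 1 * ∑ i, z i ^ 2 / u i ^ (2 * m) := by
  intro A H m
  obtain ⟨hbounds, hsum⟩ := hu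
  have hHA : H * A = diagonal fun i => 1 / u i :=
    gibbsEntropyHessian_mul_simplexMobility (fun i => (hbounds i).1.ne') (by linarith)
  have hweight : ∀ i, u i ^ (2 * m) = u i := fun i => by norm_num [m]
  refine le_of_eq ?_
  simp only [hHA, dotProduct, mulVec_diagonal, hweight, one_mul]
  exact sum_congr rfl fun i _ => by ring

/-- Biofilm model with `m = 1/2`: `zᵀ h''(u) A(u) z ≥ ∑ i, z_i² / u_i^{2m}` on the
open Gibbs simplex, with constant `c_h = 1`. -/
theorem biofilm_quadratic_form_positive (n : ℕ) (hn : 1 ≤ n) (u : Fin n → ℝ)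
    (hu : (∀ i, 0 < u i ∧ u i < 1) ∧ ∑ i, u i < 1) (z : Fin n → ℝ) :
    let A : Matrix (Fin n) (Fin n) ℝ := fun i j => if i = j then 1 - u i else -u i
    let H : Matrix (Fin n) (Fin n) ℝ :=
      fun i j => (if i = j then 1 / u i else 0) + 1 / (1 - ∑ k, u k)
    let m : ℝ := 1 / 2
    z ⬝ᵥ (H * A).mulVec z ≥ 1 * ∑ i, z i ^ 2 / u i ^ (2 * m) :=
  biofilm_quadratic_form_positive_general n u hu z
end

section
/- For the three-species Maxwell–Stefan system with diffusion coefficients d_0, d_1, d_2 > 0, for all u in the open Gibbs simplex D ⊂ ℝ² and all z ∈ ℝ², the quadratic form satisfies z^⊤ h''(u)A(u) z = d_2 z_1²/(u_1 a(u)) + d_1 z_2²/(u_2 a(u)) + d_0 (z_1+z_2)²/(u_3 a(u)), where a(u) = d_0 d_1 u_1 + d_0 d_2 u_2 + d_1 d_2 u_3 and u_3 = 1 − u_1 − u_2. -/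
open Matrix

/-! Up to the scalar `1 / a(u)`, the entropy Hessian `h''(u)` times the mobility matrix is the
symmetric matrix `diag(d₂/u₁, d₁/u₂) + (d₀/u₃) 𝟙𝟙ᵀ`; entrywise this only uses `u₁ + u₂ + u₃ = 1`.
The quadratic form of that matrix is the claimed sum of squares. -/

theorem Matrix.dotProduct_mulVec_diagonal_add_const_fin_two {R : Type*} [CommRing R]
    (p q r z₁ z₂ : R) :
    ![z₁, z₂] ⬝ᵥ !![p + r, r; r, q + r] *ᵥ ![z₁, z₂] =
      p * z₁ ^ 2 + q * z₂ ^ 2 + r * (z₁ + z₂) ^ 2 := by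
  simp only [dotProduct, mulVec, Fin.sum_univ_two, of_apply, cons_val', cons_val_zero,
    cons_val_one, empty_val', cons_val_fin_one]
  ring

theorem entropyHessian_mul_mobility {K : Type*} [Field K] {d₀ d₁ d₂ u₁ u₂ u₃ : K}
    (hu₁ : u₁ ≠ 0) (hu₂ : u₂ ≠ 0) (hu₃ : u₃ ≠ 0) (hu : u₁ + u₂ + u₃ = 1) :
    !![1 / u₁ + 1 / u₃, 1 / u₃; 1 / u₃, 1 / u₂ + 1 / u₃] *
        !![d₂ + (d₀ - d₂) * u₁, (d₀ - d₁) * u₁; (d₀ - d₂) * u₂, d₁ + (d₀ - d₁) * u₂] =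
      !![d₂ / u₁ + d₀ / u₃, d₀ / u₃; d₀ / u₃, d₁ / u₂ + d₀ / u₃] := by
  rw [mul_fin_two]
  congr 1
  simp only [vecCons_inj, and_true]
  refine ⟨⟨?_, ?_⟩, ?_, ?_⟩ <;> field_simp
  · linear_combination u₁ * (d₀ - d₂) * hu
  · linear_combination (d₀ - d₁) * hu
  · linear_combination (d₀ - d₂) * hu
  · linear_combination u₂ * (d₀ - d₁) * hu

theorem maxwell_stefan_quadratic_form_general (d0 d1 d2 : ℝ)
    (u1 u2 : ℝ) (hu1 : 0 < u1) (hu2 : 0 < u2)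
    (hsum : u1 + u2 < 1) (z1 z2 : ℝ) :
    let u3 : ℝ := 1 - u1 - u2
    let a : ℝ := d0 * d1 * u1 + d0 * d2 * u2 + d1 * d2 * u3
    let A : Matrix (Fin 2) (Fin 2) ℝ :=
      (1 / a) • !![d2 + (d0 - d2) * u1, (d0 - d1) * u1;
                   (d0 - d2) * u2, d1 + (d0 - d1) * u2]
    let H : Matrix (Fin 2) (Fin 2) ℝ :=
      !![1 / u1 + 1 / u3, 1 / u3; 1 / u3, 1 / u2 + 1 / u3]
    let z : Fin 2 → ℝ := ![z1, z2]
    z ⬝ᵥ (H * A).mulVec z =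
      d2 * z1 ^ 2 / (u1 * a) + d1 * z2 ^ 2 / (u2 * a) +
        d0 * (z1 + z2) ^ 2 / (u3 * a) := by
  intro u3 a A H z
  have hu3 : u3 ≠ 0 := by simp only [u3]; linarith
  have hu : u1 + u2 + u3 = 1 := by simp only [u3]; ring
  calc z ⬝ᵥ (H * A) *ᵥ z
      = (1 / a) * (z ⬝ᵥ (H * !![d2 + (d0 - d2) * u1, (d0 - d1) * u1;
          (d0 - d2) * u2, d1 + (d0 - d1) * u2]) *ᵥ z) := by
        simp only [A, Matrix.mul_smul, smul_mulVec, dotProduct_smul, smul_eq_mul]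
    _ = (1 / a) * (d2 / u1 * z1 ^ 2 + d1 / u2 * z2 ^ 2 + d0 / u3 * (z1 + z2) ^ 2) := by
        rw [entropyHessian_mul_mobility hu1.ne' hu2.ne' hu3 hu,
          dotProduct_mulVec_diagonal_add_const_fin_two]
    _ = _ := by clear_value u3 a; ring

/-- Three-species Maxwell–Stefan system: the quadratic form identity
`zᵀ h''(u) A(u) z = d₂ z₁²/(u₁ a(u)) + d₁ z₂²/(u₂ a(u)) + d₀ (z₁+z₂)²/(u₃ a(u))`,
where `u₃ = 1 - u₁ - u₂` and `a(u) = d₀d₁u₁ + d₀d₂u₂ + d₁d₂u₃`. -/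
theorem maxwell_stefan_quadratic_form (d0 d1 d2 : ℝ)
    (hd0 : 0 < d0) (hd1 : 0 < d1) (hd2 : 0 < d2)
    (u1 u2 : ℝ) (hu1 : 0 < u1) (hu1' : u1 < 1) (hu2 : 0 < u2) (hu2' : u2 < 1)
    (hsum : u1 + u2 < 1) (z1 z2 : ℝ) :
    let u3 : ℝ := 1 - u1 - u2
    let a : ℝ := d0 * d1 * u1 + d0 * d2 * u2 + d1 * d2 * u3
    let A : Matrix (Fin 2) (Fin 2) ℝ :=
      (1 / a) • !![d2 + (d0 - d2) * u1, (d0 - d1) * u1;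
                   (d0 - d2) * u2, d1 + (d0 - d1) * u2]
    let H : Matrix (Fin 2) (Fin 2) ℝ :=
      !![1 / u1 + 1 / u3, 1 / u3; 1 / u3, 1 / u2 + 1 / u3]
    let z : Fin 2 → ℝ := ![z1, z2]
    z ⬝ᵥ (H * A).mulVec z =
      d2 * z1 ^ 2 / (u1 * a) + d1 * z2 ^ 2 / (u2 * a) +
        d0 * (z1 + z2) ^ 2 / (u3 * a) :=
  maxwell_stefan_quadratic_form_general d0 d1 d2 u1 u2 hu1 hu2 hsum z1 z2
end

section
/- For the three-species Maxwell–Stefan system there exists a constant c > 0 such that z^⊤ h''(u)A(u) z ≥ c (z_1²/u_1 + z_2²/u_2) for all u ∈ D and z ∈ ℝ². -/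
open Real Matrix

set_option maxHeartbeats 1000000

/-- Three-species Maxwell–Stefan system: there is a constant `c > 0` such that
`zᵀ h''(u) A(u) z ≥ c (z₁²/u₁ + z₂²/u₂)` for all `u` in the open Gibbs simplex
and all `z ∈ ℝ²`. -/
theorem maxwell_stefan_quadratic_form_lower_bound (d0 d1 d2 : ℝ)
    (hd0 : 0 < d0) (hd1 : 0 < d1) (hd2 : 0 < d2) :
    ∃ c > (0 : ℝ), ∀ u1 u2 : ℝ, 0 < u1 → u1 < 1 → 0 < u2 → u2 < 1 →
      u1 + u2 < 1 → ∀ z1 z2 : ℝ,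
      (let u3 : ℝ := 1 - u1 - u2
       let a : ℝ := d0 * d1 * u1 + d0 * d2 * u2 + d1 * d2 * u3
       let A : Matrix (Fin 2) (Fin 2) ℝ :=
         (1 / a) • !![d2 + (d0 - d2) * u1, (d0 - d1) * u1;
                      (d0 - d2) * u2, d1 + (d0 - d1) * u2]
       let H : Matrix (Fin 2) (Fin 2) ℝ :=
         !![1 / u1 + 1 / u3, 1 / u3; 1 / u3, 1 / u2 + 1 / u3]
       let z : Fin 2 → ℝ := ![z1, z2]
       z ⬝ᵥ (H * A).mulVec z) ≥ c * (z1 ^ 2 / u1 + z2 ^ 2 / u2) := by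
  set S : ℝ := d0 * d1 + d0 * d2 + d1 * d2 with hS
  have hSpos : 0 < S := by positivity
  refine ⟨min d1 d2 / S, by positivity, ?_⟩
  intro u1 u2 hu1 hu1' hu2 hu2' hsum z1 z2
  simp only
  have hu3 : (0:ℝ) < 1 - u1 - u2 := by linarith
  have ha : 0 < d0 * d1 * u1 + d0 * d2 * u2 + d1 * d2 * (1 - u1 - u2) := by positivity
  set a : ℝ := d0 * d1 * u1 + d0 * d2 * u2 + d1 * d2 * (1 - u1 - u2) with hadef
  have haS : a ≤ S := by
    have h1 : d0 * d1 * u1 ≤ d0 * d1 := by nlinarith [mul_pos hd0 hd1]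
    have h2 : d0 * d2 * u2 ≤ d0 * d2 := by nlinarith [mul_pos hd0 hd2]
    have h3 : d1 * d2 * (1 - u1 - u2) ≤ d1 * d2 := by nlinarith [mul_pos hd1 hd2]
    simp only [hS, hadef]; linarith
  have key : (![z1, z2] ⬝ᵥ ((!![1 / u1 + 1 / (1 - u1 - u2), 1 / (1 - u1 - u2);
        1 / (1 - u1 - u2), 1 / u2 + 1 / (1 - u1 - u2)] *
      ((1 / a) • !![d2 + (d0 - d2) * u1, (d0 - d1) * u1;
                    (d0 - d2) * u2, d1 + (d0 - d1) * u2])).mulVec ![z1, z2]))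
      = (d2 * z1 ^ 2 / u1 + d1 * z2 ^ 2 / u2 + d0 * (z1 + z2) ^ 2 / (1 - u1 - u2)) / a := by
    simp [Matrix.mul_apply, Matrix.mulVec, dotProduct, Fin.sum_univ_two]
    field_simp
    ring
  rw [key, ge_iff_le, div_mul_eq_mul_div, div_le_div_iff₀ hSpos ha]
  have hmin1 : min d1 d2 ≤ d1 := min_le_left _ _
  have hmin2 : min d1 d2 ≤ d2 := min_le_right _ _
  have hma2 : min d1 d2 * a ≤ d2 * S := mul_le_mul hmin2 haS ha.le hd2.le
  have hma1 : min d1 d2 * a ≤ d1 * S := mul_le_mul hmin1 haS ha.le hd1.le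
  have e1 : min d1 d2 * (z1 ^ 2 / u1) * a ≤ d2 * z1 ^ 2 / u1 * S := by
    calc min d1 d2 * (z1 ^ 2 / u1) * a = min d1 d2 * a * (z1 ^ 2 / u1) := by ring
    _ ≤ d2 * S * (z1 ^ 2 / u1) :=
        mul_le_mul_of_nonneg_right hma2 (by positivity)
    _ = d2 * z1 ^ 2 / u1 * S := by ring
  have e2 : min d1 d2 * (z2 ^ 2 / u2) * a ≤ d1 * z2 ^ 2 / u2 * S := by
    calc min d1 d2 * (z2 ^ 2 / u2) * a = min d1 d2 * a * (z2 ^ 2 / u2) := by ring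
    _ ≤ d1 * S * (z2 ^ 2 / u2) :=
        mul_le_mul_of_nonneg_right hma1 (by positivity)
    _ = d1 * z2 ^ 2 / u2 * S := by ring
  have e3 : 0 ≤ d0 * (z1 + z2) ^ 2 / (1 - u1 - u2) * S := by positivity
  nlinarith [e1, e2, e3]
end

section
/- For the biofilm model, the regularized quadratic form satisfies the exact decomposition z^⊤ h''(u^δ)A(u)z − Σ_{i=1}^n z_i²/u_i^δ = Σ_{i,j=1}^n (u_{n+1}/u_{n+1}^δ − u_i/u_i^δ) z_i z_j =: z^⊤ R_δ(u) z, for all u in the open Gibbs simplex and z ∈ ℝ^n, where u_i^δ = (u_i + δ/n)/(1+δ) and u_{n+1}^δ = u_{n+1}/(1+δ) with u_{n+1} = 1 − Σ u_k. -/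
open Finset Matrix

/-! Writing `h''(u^δ) = diag(1/u^δ) + (1/u_{n+1}^δ) 𝟙𝟙ᵀ` and `A(u) = I − u 𝟙ᵀ`, the product is
`diag(1/u^δ) + r 𝟙ᵀ` with `r_i = (1 − ∑ u_k)/u_{n+1}^δ − u_i/u_i^δ`, since `𝟙ᵀ u = ∑ u_k`.
The quadratic form of the diagonal part is `∑ z_i²/u_i^δ`, and that of `r 𝟙ᵀ` is the
right-hand side. -/

section

variable {ι R : Type*} [Fintype ι] [DecidableEq ι] [CommRing R]

theorem diagonal_add_const_mul_one_sub_col (d : ι → R) (c : R) (u : ι → R) :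
    (diagonal d + of fun _ _ => c) * (1 - of fun i _ => u i) =
      diagonal d + of fun i _ => c * (1 - ∑ k, u k) - d i * u i := by
  rw [mul_sub, mul_one, add_mul]
  ext i j
  simp only [Matrix.add_apply, Matrix.sub_apply, diagonal_mul, of_apply]
  simp only [Matrix.mul_apply, of_apply, ← Finset.mul_sum]
  ring

theorem dotProduct_diagonal_add_col_mulVec (d r z : ι → R) :
    z ⬝ᵥ (diagonal d + of fun i _ => r i) *ᵥ z =
      ∑ i, d i * z i ^ 2 + ∑ i, ∑ j, r i * z i * z j := by
  rw [add_mulVec, dotProduct_add]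
  congr 1
  · simp only [dotProduct, mulVec_diagonal]
    exact sum_congr rfl fun i _ => by ring
  · simp only [dotProduct, mulVec, of_apply, Finset.mul_sum]
    exact sum_congr rfl fun i _ => sum_congr rfl fun j _ => by ring

end

theorem biofilm_regularized_decomposition_general (n : ℕ) (δ : ℝ)
    (u : Fin n → ℝ) (z : Fin n → ℝ) :
    let ud : Fin n → ℝ := fun i => (u i + δ / n) / (1 + δ)
    let un1 : ℝ := 1 - ∑ k, u k
    let un1d : ℝ := un1 / (1 + δ)
    let A : Matrix (Fin n) (Fin n) ℝ := fun i j => if i = j then 1 - u i else -u i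
    let H : Matrix (Fin n) (Fin n) ℝ :=
      fun i j => (if i = j then 1 / ud i else 0) + 1 / un1d
    z ⬝ᵥ (H * A).mulVec z - ∑ i, z i ^ 2 / ud i =
      ∑ i, ∑ j, (un1 / un1d - u i / ud i) * z i * z j := by
  intro ud un1 un1d A H
  have hH : H = diagonal (fun i => 1 / ud i) + of fun _ _ => 1 / un1d := by
    ext i j
    simp [H, diagonal_apply]
  have hA : A = 1 - of fun i _ => u i := by
    ext i j
    by_cases h : i = j <;> simp [A, one_apply, h]
  rw [hH, hA, diagonal_add_const_mul_one_sub_col, dotProduct_diagonal_add_col_mulVec]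
  simp only [one_div_mul_eq_div, add_sub_cancel_left]
  rfl

/-- Biofilm model, regularized quadratic form decomposition:
`zᵀ h''(u^δ) A(u) z − ∑ i, z_i²/u_i^δ = ∑ i j, (u_{n+1}/u_{n+1}^δ − u_i/u_i^δ) z_i z_j`,
for `u` in the open Gibbs simplex, with `u_i^δ = (u_i + δ/n)/(1+δ)` and
`u_{n+1}^δ = u_{n+1}/(1+δ)`, `u_{n+1} = 1 − ∑ u_k`. -/
theorem biofilm_regularized_decomposition (n : ℕ) (hn : 1 ≤ n) (δ : ℝ) (hδ : 0 < δ)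
    (u : Fin n → ℝ) (hu : (∀ i, 0 < u i ∧ u i < 1) ∧ ∑ i, u i < 1) (z : Fin n → ℝ) :
    let ud : Fin n → ℝ := fun i => (u i + δ / n) / (1 + δ)
    let un1 : ℝ := 1 - ∑ k, u k
    let un1d : ℝ := un1 / (1 + δ)
    let A : Matrix (Fin n) (Fin n) ℝ := fun i j => if i = j then 1 - u i else -u i
    let H : Matrix (Fin n) (Fin n) ℝ :=
      fun i j => (if i = j then 1 / ud i else 0) + 1 / un1d
    z ⬝ᵥ (H * A).mulVec z - ∑ i, z i ^ 2 / ud i =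
      ∑ i, ∑ j, (un1 / un1d - u i / ud i) * z i * z j :=
  biofilm_regularized_decomposition_general n δ u z
end
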